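/- arXiv:1406.1740 — 5 statements merged into one kernel-verified Lean document; each statement's English description precedes it below -/
import Mathlib

section
/- Fix θ ∈ (0, π/2], β ∈ (0, π/2), and b ∈ ℝ. Then ϑ(λ, β, b) − λ tends to b + log( sin β / sin θ ) as λ → +∞. -/
open Real Filter

lemma arsinh_def' (x : ℝ) : Real.arsinh x = Real.log (x + Real.sqrt (1 + x ^ 2)) := rfl

lemma exp_neg_tendsto : Tendsto (fun t : ℝ => Real.exp (-t)) atTop (nhds 0) :=
  Real.tendsto_exp_atBot.comp tendsto_neg_atTop_atBot

lemma sinh_mul_exp_neg : Tendsto (fun t : ℝ => Real.sinh t * Real.exp (-t)) atTop (nhds (1/2)) := by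
  have h : Tendsto (fun t : ℝ => (1 - Real.exp (-t) ^ 2) / 2) atTop (nhds ((1 - 0 ^ 2)/2)) :=
    (tendsto_const_nhds.sub (exp_neg_tendsto.pow 2)).div_const 2
  norm_num at h
  refine h.congr (fun t => ?_)
  have he : Real.exp t * Real.exp (-t) = 1 := by rw [← Real.exp_add]; simp
  rw [Real.sinh_eq]
  nlinarith [he]

lemma main_lemma (s : ℝ) (hs : 0 < s) :
    Tendsto (fun t : ℝ => Real.arsinh (Real.sinh t * s) - t) atTop (nhds (Real.log s)) := by
  set g : ℝ → ℝ := fun t =>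
    (Real.sinh t * s + Real.sqrt (1 + (Real.sinh t * s) ^ 2)) * Real.exp (-t) with hg
  have hg2 : Tendsto g atTop (nhds s) := by
    have h1 : Tendsto (fun t : ℝ => Real.sinh t * s * Real.exp (-t)) atTop (nhds (s / 2)) := by
      have := sinh_mul_exp_neg.mul_const s
      refine this.congr' (Eventually.of_forall fun t => by ring) |>.mono_right ?_
      rw [show (1:ℝ)/2 * s = s/2 by ring]
    have h2 : Tendsto (fun t : ℝ => Real.sqrt (1 + (Real.sinh t * s) ^ 2) * Real.exp (-t))
        atTop (nhds (s / 2)) := by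
      have heq : ∀ t : ℝ, Real.sqrt (1 + (Real.sinh t * s) ^ 2) * Real.exp (-t)
          = Real.sqrt (Real.exp (-t) ^ 2 + (Real.sinh t * s * Real.exp (-t)) ^ 2) := by
        intro t
        rw [eq_comm, show Real.exp (-t) ^ 2 + (Real.sinh t * s * Real.exp (-t)) ^ 2
            = (1 + (Real.sinh t * s) ^ 2) * Real.exp (-t) ^ 2 from by ring,
          Real.sqrt_mul (by positivity), Real.sqrt_sq (Real.exp_pos (-t)).le]
      have h0 := exp_neg_tendsto
      have hin : Tendsto (fun t : ℝ => Real.exp (-t) ^ 2 + (Real.sinh t * s * Real.exp (-t)) ^ 2)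
          atTop (nhds (0 ^ 2 + (s/2) ^ 2)) := (h0.pow 2).add (h1.pow 2)
      have := (Real.continuous_sqrt.tendsto _).comp hin
      have hval : Real.sqrt ((0:ℝ) ^ 2 + (s/2) ^ 2) = s / 2 := by
        rw [show (0:ℝ)^2 + (s/2)^2 = (s/2)^2 by ring, Real.sqrt_sq (by positivity)]
      rw [hval] at this
      exact this.congr (fun t => (heq t).symm)
    have := h1.add h2
    rw [show s/2 + s/2 = s by ring] at this
    exact this.congr (fun t => by simp only [hg]; ring)
  have hlog : Tendsto (fun t => Real.log (g t)) atTop (nhds (Real.log s)) :=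
    ((Real.continuousAt_log hs.ne').tendsto).comp hg2
  refine hlog.congr' ?_
  filter_upwards [eventually_gt_atTop (0:ℝ)] with t ht
  have hx : 0 < Real.sinh t * s := mul_pos (Real.sinh_pos_iff.2 ht) hs
  have hpos : 0 < Real.sinh t * s + Real.sqrt (1 + (Real.sinh t * s) ^ 2) := by positivity
  rw [hg, Real.log_mul hpos.ne' (Real.exp_pos (-t)).ne', Real.log_exp, arsinh_def']
  ring

/-- The function `ϑ(λ, β, b) = arsinh (sinh (b + arsinh (sinh λ / sin θ)) * sin β)`. -/
noncomputable def vartheta (θ lam β b : ℝ) : ℝ :=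
  Real.arsinh (Real.sinh (b + Real.arsinh (Real.sinh lam / Real.sin θ)) * Real.sin β)

/-- Fix `θ ∈ (0, π/2]`, `β ∈ (0, π/2)` and `b ∈ ℝ`. Then `ϑ(λ, β, b) - λ` tends to
`b + log (sin β / sin θ)` as `λ → +∞`. -/
theorem vartheta_sub_tendsto (θ β b : ℝ) (hθ : θ ∈ Set.Ioc 0 (Real.pi / 2))
    (hβ : β ∈ Set.Ioo 0 (Real.pi / 2)) :
    Filter.Tendsto (fun lam : ℝ => vartheta θ lam β b - lam)
      Filter.atTop (nhds (b + Real.log (Real.sin β / Real.sin θ))) := by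
  have hsθ : 0 < Real.sin θ := Real.sin_pos_of_pos_of_lt_pi hθ.1
    (lt_of_le_of_lt hθ.2 (by linarith [Real.pi_pos]))
  have hsβ : 0 < Real.sin β := Real.sin_pos_of_pos_of_lt_pi hβ.1
    (lt_trans hβ.2 (by linarith [Real.pi_pos]))
  set a : ℝ → ℝ := fun lam => Real.arsinh (Real.sinh lam / Real.sin θ) with ha
  have h1 : Tendsto (fun lam => a lam - lam) atTop (nhds (Real.log (Real.sin θ)⁻¹)) := by
    have := main_lemma (Real.sin θ)⁻¹ (by positivity)
    refine this.congr (fun lam => ?_)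
    simp only [ha, div_eq_mul_inv]
  have h2 : Tendsto (fun lam => b + a lam) atTop atTop := by
    refine tendsto_atTop_add_const_left _ b ?_
    have : Tendsto (fun lam => (a lam - lam) + lam) atTop atTop :=
      Filter.tendsto_atTop_add_left_of_le' atTop (Real.log (Real.sin θ)⁻¹ - 1)
        (h1.eventually (eventually_ge_nhds (by linarith))) tendsto_id
    exact this.congr (fun lam => by ring)
  have h3 : Tendsto (fun lam => Real.arsinh (Real.sinh (b + a lam) * Real.sin β) - (b + a lam))
      atTop (nhds (Real.log (Real.sin β))) := (main_lemma _ hsβ).comp h2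
  have h4 := (h3.add h1).add_const b
  have hval : Real.log (Real.sin β) + Real.log (Real.sin θ)⁻¹ + b
      = b + Real.log (Real.sin β / Real.sin θ) := by
    rw [Real.log_div hsβ.ne' hsθ.ne', Real.log_inv]; ring
  rw [hval] at h4
  refine h4.congr (fun lam => ?_)
  simp only [vartheta, ha]
  ring
end

section
/- Fix θ ∈ (0, π/2]. The functions (β, b) ↦ ϑ(λ, β, b) − λ converge, as λ → +∞, to the function (β, b) ↦ b + log( sin β / sin θ ) uniformly on every compact subset of (0, π/2) × ℝ. -/
/-- Auxiliary: the coefficient `e^{-λ} · sinh (b + arsinh (sinh λ / sin θ))`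
expressed as a function of `t = e^{-λ}`. -/
noncomputable def gAux (θ t b : ℝ) : ℝ :=
  Real.sinh b * Real.sqrt (t ^ 2 + ((1 - t ^ 2) / (2 * Real.sin θ)) ^ 2) +
    Real.cosh b * ((1 - t ^ 2) / (2 * Real.sin θ))

/-- Auxiliary: `ϑ(λ, β, b) - λ` expressed as a function of `t = e^{-λ}` and `p = (β, b)`. -/
noncomputable def HAux (θ : ℝ) (t : ℝ) (p : ℝ × ℝ) : ℝ :=
  Real.log (gAux θ t p.2 * Real.sin p.1 +
    Real.sqrt (t ^ 2 + (gAux θ t p.2 * Real.sin p.1) ^ 2))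

lemma aux_pos {x t : ℝ} (h : 0 < x ∨ t ≠ 0) : 0 < x + Real.sqrt (t ^ 2 + x ^ 2) := by
  rcases h with h | h
  · have := Real.sqrt_nonneg (t ^ 2 + x ^ 2); linarith
  · have ht : 0 < t ^ 2 := by positivity
    have h1 : Real.sqrt (t ^ 2 + x ^ 2) ^ 2 = t ^ 2 + x ^ 2 :=
      Real.sq_sqrt (by positivity)
    have h2 := Real.sqrt_nonneg (t ^ 2 + x ^ 2)
    nlinarith

lemma gAux_zero (θ b : ℝ) (hs : 0 < Real.sin θ) :
    gAux θ 0 b = Real.exp b / (2 * Real.sin θ) := by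
  have h : Real.sqrt ((0:ℝ) ^ 2 + ((1 - (0:ℝ) ^ 2) / (2 * Real.sin θ)) ^ 2)
      = 1 / (2 * Real.sin θ) := by
    rw [show ((0:ℝ) ^ 2 + ((1 - (0:ℝ) ^ 2) / (2 * Real.sin θ)) ^ 2)
        = (1 / (2 * Real.sin θ)) ^ 2 by ring]
    exact Real.sqrt_sq (by positivity)
  rw [gAux, h, ← Real.sinh_add_cosh]
  ring

lemma vartheta_sub_eq (θ lam β b : ℝ) :
    vartheta θ lam β b - lam = HAux θ (Real.exp (-lam)) (β, b) := by
  set s := Real.sin θ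
  set t := Real.exp (-lam) with htdef
  have t0 : 0 < t := Real.exp_pos _
  have h1 : t * Real.exp lam = 1 := by rw [htdef, ← Real.exp_add]; simp
  have ht : t * Real.sinh lam = (1 - t ^ 2) / 2 := by
    rw [Real.sinh_eq]
    have h2 : t * Real.exp (-lam) = t ^ 2 := by rw [← htdef]; ring
    linear_combination h1 / 2 - h2 / 2
  have hx : t * (Real.sinh lam / s) = (1 - t ^ 2) / (2 * s) := by
    rw [← mul_div_assoc, ht]; ring
  set A := Real.arsinh (Real.sinh lam / s) with hA
  have hcosh : t * Real.cosh A = Real.sqrt (t ^ 2 + ((1 - t ^ 2) / (2 * s)) ^ 2) := by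
    rw [hA, Real.cosh_arsinh, ← Real.sqrt_sq t0.le, ← Real.sqrt_mul (sq_nonneg t),
      show t ^ 2 * (1 + (Real.sinh lam / s) ^ 2)
        = t ^ 2 + (t * (Real.sinh lam / s)) ^ 2 by ring, hx, Real.sq_sqrt (sq_nonneg t)]
  set u := Real.sinh (b + A) with hu
  have htu : t * u = gAux θ t b := by
    rw [hu, Real.sinh_add, gAux, Real.sinh_arsinh]
    rw [show t * (Real.sinh b * Real.cosh A + Real.cosh b * (Real.sinh lam / s))
        = Real.sinh b * (t * Real.cosh A) + Real.cosh b * (t * (Real.sinh lam / s)) by ring,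
      hcosh, hx]
  set c := Real.sin β
  have hXpos : 0 < u * c + Real.sqrt (1 + (u * c) ^ 2) := by
    have h1' : Real.sqrt (1 + (u * c) ^ 2) ^ 2 = 1 + (u * c) ^ 2 :=
      Real.sq_sqrt (by positivity)
    have h2' := Real.sqrt_nonneg (1 + (u * c) ^ 2)
    nlinarith
  have key : t * (u * c + Real.sqrt (1 + (u * c) ^ 2))
      = gAux θ t b * c + Real.sqrt (t ^ 2 + (gAux θ t b * c) ^ 2) := by
    have : t * Real.sqrt (1 + (u * c) ^ 2)
        = Real.sqrt (t ^ 2 + (t * (u * c)) ^ 2) := by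
      rw [show t ^ 2 + (t * (u * c)) ^ 2 = t ^ 2 * (1 + (u * c) ^ 2) by ring,
        Real.sqrt_mul (sq_nonneg t), Real.sqrt_sq t0.le]
    rw [mul_add, this, show t * (u * c) = (t * u) * c by ring, htu]
  have : vartheta θ lam β b = Real.log (u * c + Real.sqrt (1 + (u * c) ^ 2)) := by
    rw [vartheta, Real.arsinh]
  rw [this, HAux]
  have hlog : Real.log t = -lam := by rw [htdef, Real.log_exp]
  show Real.log (u * c + Real.sqrt (1 + (u * c) ^ 2)) - lam
      = Real.log (gAux θ t b * c + Real.sqrt (t ^ 2 + (gAux θ t b * c) ^ 2))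
  rw [← key, Real.log_mul (ne_of_gt t0) (ne_of_gt hXpos), hlog]
  ring

lemma HAux_zero (θ : ℝ) (hs : 0 < Real.sin θ) {β b : ℝ} (hβ : 0 < Real.sin β) :
    HAux θ 0 (β, b) = b + Real.log (Real.sin β / Real.sin θ) := by
  have hg := gAux_zero θ b hs
  have hApos : 0 < gAux θ 0 b * Real.sin β := by
    rw [hg]; positivity
  rw [HAux]
  simp only []
  rw [show (0:ℝ) ^ 2 + (gAux θ 0 b * Real.sin β) ^ 2 = (gAux θ 0 b * Real.sin β) ^ 2 by ring,
    Real.sqrt_sq hApos.le, hg]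
  rw [show Real.exp b / (2 * Real.sin θ) * Real.sin β +
        Real.exp b / (2 * Real.sin θ) * Real.sin β
      = Real.exp b * (Real.sin β / Real.sin θ) by field_simp; ring]
  rw [Real.log_mul (Real.exp_ne_zero b) (by positivity), Real.log_exp]

lemma my_comp_tendsto {α ι ι' β : Type*} [UniformSpace β] {F : ι → α → β} {f : α → β}
    {l : Filter ι} {s : Set α} (h : TendstoUniformlyOn F f l s) {g : ι' → ι}
    {l' : Filter ι'} (hg : Filter.Tendsto g l' l) :
    TendstoUniformlyOn (fun i => F (g i)) f l' s :=
  fun u hu => hg.eventually (h u hu)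

/-- Fix `θ ∈ (0, π/2]`. The functions `(β, b) ↦ ϑ(λ, β, b) - λ` converge, as `λ → +∞`,
to `(β, b) ↦ b + log (sin β / sin θ)` uniformly on every compact subset of
`(0, π/2) × ℝ`. -/
theorem vartheta_sub_tendstoUniformlyOn_compacts (θ : ℝ)
    (hθ : θ ∈ Set.Ioc 0 (Real.pi / 2)) (K : Set (ℝ × ℝ))
    (hK : K ⊆ Set.Ioo 0 (Real.pi / 2) ×ˢ (Set.univ : Set ℝ)) (hKc : IsCompact K) :
    TendstoUniformlyOn
      (fun (lam : ℝ) (p : ℝ × ℝ) => vartheta θ lam p.1 p.2 - lam)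
      (fun p : ℝ × ℝ => p.2 + Real.log (Real.sin p.1 / Real.sin θ))
      Filter.atTop K := by
  have hpi := Real.pi_pos
  have hs : 0 < Real.sin θ :=
    Real.sin_pos_of_pos_of_lt_pi hθ.1 (lt_of_le_of_lt hθ.2 (by linarith))
  have hsinK : ∀ p ∈ K, 0 < Real.sin p.1 := fun p hp => by
    have h := hK hp
    exact Real.sin_pos_of_pos_of_lt_pi h.1.1 (lt_trans h.1.2 (by linarith))
  -- continuity of the argument of the logarithm
  have hEcont : Continuous (fun q : ℝ × (ℝ × ℝ) =>
      gAux θ q.1 q.2.2 * Real.sin q.2.1 +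
        Real.sqrt (q.1 ^ 2 + (gAux θ q.1 q.2.2 * Real.sin q.2.1) ^ 2)) := by
    unfold gAux; fun_prop
  have hEpos : ∀ q ∈ Set.Icc (0:ℝ) 1 ×ˢ K,
      0 < gAux θ q.1 q.2.2 * Real.sin q.2.1 +
        Real.sqrt (q.1 ^ 2 + (gAux θ q.1 q.2.2 * Real.sin q.2.1) ^ 2) := by
    rintro ⟨t, p⟩ ⟨ht, hp⟩
    rcases eq_or_ne t 0 with rfl | htne
    · refine aux_pos (Or.inl ?_)
      have := hsinK p hp
      rw [gAux_zero θ p.2 hs]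
      positivity
    · exact aux_pos (Or.inr htne)
  have hHcont : ContinuousOn (Function.uncurry (HAux θ)) (Set.Icc (0:ℝ) 1 ×ˢ K) := by
    have : Function.uncurry (HAux θ) = fun q : ℝ × (ℝ × ℝ) =>
        Real.log (gAux θ q.1 q.2.2 * Real.sin q.2.1 +
          Real.sqrt (q.1 ^ 2 + (gAux θ q.1 q.2.2 * Real.sin q.2.1) ^ 2)) := by
      funext q; rfl
    rw [this]
    exact ContinuousOn.log hEcont.continuousOn (fun q hq => ne_of_gt (hEpos q hq))
  have hUC : UniformContinuousOn (Function.uncurry (HAux θ)) (Set.Icc (0:ℝ) 1 ×ˢ K) :=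
    ((isCompact_Icc).prod hKc).uniformContinuousOn_of_continuous hHcont
  have hbase : TendstoUniformlyOn (HAux θ) (HAux θ 0)
      (nhdsWithin (0:ℝ) (Set.Icc 0 1)) K :=
    hUC.tendstoUniformlyOn (by constructor <;> norm_num)
  have hexp : Filter.Tendsto (fun lam : ℝ => Real.exp (-lam)) Filter.atTop
      (nhdsWithin (0:ℝ) (Set.Icc 0 1)) := by
    apply tendsto_nhdsWithin_of_tendsto_nhds_of_eventually_within
    · exact Real.tendsto_exp_atBot.comp Filter.tendsto_neg_atTop_atBot
    · filter_upwards [Filter.eventually_ge_atTop (0:ℝ)] with lam hlam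
      exact ⟨(Real.exp_pos _).le, Real.exp_le_one_iff.mpr (by linarith)⟩
  have h1 : TendstoUniformlyOn (fun lam : ℝ => HAux θ (Real.exp (-lam))) (HAux θ 0)
      Filter.atTop K := my_comp_tendsto hbase hexp
  have hfun : (fun (lam : ℝ) (p : ℝ × ℝ) => vartheta θ lam p.1 p.2 - lam)
      = fun lam : ℝ => HAux θ (Real.exp (-lam)) := by
    funext lam p
    exact vartheta_sub_eq θ lam p.1 p.2
  rw [hfun]
  exact h1.congr_right (fun p hp => HAux_zero θ hs (hsinK p hp))
end

section
/- Fix θ ∈ (0, π/2], β ∈ (0, π/2), and b ∈ ℝ. Then the derivative with respect to β of the function β' ↦ ϑ(λ, β', b), evaluated at β, tends to cos β / sin β as λ → +∞. -/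
/-!
For fixed `λ` the function `β' ↦ ϑ(λ, β', b)` is `β' ↦ arsinh (A sin β')` with
`A = sinh (b + arsinh (sinh λ / sin θ))`, whose derivative at `β` is
`A cos β / √(1 + A² sin² β)`. Since `sin θ > 0`, `A → +∞` as `λ → +∞`, and this quotient
tends to `cos β / sin β`.
-/

open Real Filter Topology

lemma hasDerivAt_arsinh_const_mul_sin (A β : ℝ) :
    HasDerivAt (fun β' => arsinh (A * sin β')) (A * cos β / √(1 + (A * sin β) ^ 2)) β := by
  rw [div_eq_inv_mul]
  exact (hasDerivAt_arsinh _).comp β ((hasDerivAt_sin β).const_mul A)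

lemma tendsto_mul_div_sqrt_one_add_sq_atTop {s : ℝ} (hs : 0 < s) (c : ℝ) :
    Tendsto (fun A => A * c / √(1 + (A * s) ^ 2)) atTop (𝓝 (c / s)) := by
  have h_eq : ∀ᶠ A : ℝ in atTop, c / √((A ^ 2)⁻¹ + s ^ 2) = A * c / √(1 + (A * s) ^ 2) := by
    filter_upwards [eventually_gt_atTop 0] with A hA
    have h_sqrt : √(1 + (A * s) ^ 2) = A * √((A ^ 2)⁻¹ + s ^ 2) := by
      rw [← sqrt_sq hA.le, ← sqrt_mul (sq_nonneg A), sqrt_sq hA.le]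
      congr 1
      field_simp
    rw [h_sqrt, mul_div_mul_left _ _ hA.ne']
  have h_lim : Tendsto (fun A : ℝ => √((A ^ 2)⁻¹ + s ^ 2)) atTop (𝓝 s) := by
    have h := ((tendsto_pow_atTop two_ne_zero).inv_tendsto_atTop.add_const (s ^ 2)).sqrt
    rwa [zero_add, sqrt_sq hs.le] at h
  exact (tendsto_const_nhds.div h_lim hs.ne').congr' h_eq

lemma tendsto_sinh_add_arsinh_sinh_div_atTop (b : ℝ) {c : ℝ} (hc : 0 < c) :
    Tendsto (fun lam => sinh (b + arsinh (sinh lam / c))) atTop atTop :=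
  sinhOrderIso.tendsto_atTop.comp <| tendsto_atTop_add_const_left _ b <|
    sinhOrderIso.symm.tendsto_atTop.comp <| sinhOrderIso.tendsto_atTop.atTop_div_const hc

/-- Fix `θ ∈ (0, π/2]`, `β ∈ (0, π/2)` and `b ∈ ℝ`. The derivative with respect to `β`
of `β' ↦ ϑ(λ, β', b)`, evaluated at `β`, tends to `cos β / sin β` as `λ → +∞`. -/
theorem deriv_vartheta_tendsto (θ β b : ℝ) (hθ : θ ∈ Set.Ioc 0 (Real.pi / 2))
    (hβ : β ∈ Set.Ioo 0 (Real.pi / 2)) :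
    Filter.Tendsto (fun lam : ℝ => deriv (fun β' : ℝ => vartheta θ lam β' b) β)
      Filter.atTop (nhds (Real.cos β / Real.sin β)) := by
  have hsin_β : 0 < sin β := sin_pos_of_pos_of_lt_pi hβ.1 (by linarith [hβ.2, pi_pos])
  have hsin_θ : 0 < sin θ := sin_pos_of_pos_of_lt_pi hθ.1 (by linarith [hθ.2, pi_pos])
  have h_deriv : ∀ lam, deriv (fun β' => vartheta θ lam β' b) β =
      (fun A => A * cos β / √(1 + (A * sin β) ^ 2)) (sinh (b + arsinh (sinh lam / sin θ))) :=
    fun lam => (hasDerivAt_arsinh_const_mul_sin _ β).deriv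
  simp only [h_deriv]
  exact (tendsto_mul_div_sqrt_one_add_sq_atTop hsin_β _).comp
    (tendsto_sinh_add_arsinh_sinh_div_atTop b hsin_θ)
end

section
/- Fix θ ∈ (0, π/2] and real numbers B and c'. Then there exists β₁ ∈ (0, π/2) such that, for all sufficiently large λ', one has arsinh( sinh(λ' + c') · sin β₁ ) ≤ arsinh( sinh(λ') · sin θ ) + B. -/
open Real Filter

lemma my_arsinh_le_log {x : ℝ} (hx : 0 ≤ x) : Real.arsinh x ≤ Real.log (2 * x + 1) := by
  rw [Real.arsinh]
  apply Real.log_le_log (by positivity)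
  have h1 : Real.sqrt (1 + x ^ 2) ≤ x + 1 := by
    rw [show x + 1 = Real.sqrt ((x + 1) ^ 2) from (Real.sqrt_sq (by linarith)).symm]
    exact Real.sqrt_le_sqrt (by nlinarith)
  linarith

lemma my_log_le_arsinh {y : ℝ} (hy : 0 < y) : Real.log (2 * y) ≤ Real.arsinh y := by
  rw [Real.arsinh]
  apply Real.log_le_log (by positivity)
  have h1 : y ≤ Real.sqrt (1 + y ^ 2) := by
    nlinarith [Real.sq_sqrt (show (0:ℝ) ≤ 1 + y ^ 2 by positivity),
      Real.sqrt_nonneg (1 + y ^ 2)]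
  linarith

/-- Fix `θ ∈ (0, π/2]` and real numbers `B` and `c'`. Then there exists
`β₁ ∈ (0, π/2)` such that, for all sufficiently large `λ'`,
`arsinh (sinh (λ' + c') * sin β₁) ≤ arsinh (sinh λ' * sin θ) + B`. -/
theorem exists_beta_one (θ B c' : ℝ) (hθ : θ ∈ Set.Ioc 0 (Real.pi / 2)) :
    ∃ β₁ ∈ Set.Ioo 0 (Real.pi / 2), ∀ᶠ l' in Filter.atTop,
      Real.arsinh (Real.sinh (l' + c') * Real.sin β₁) ≤
        Real.arsinh (Real.sinh l' * Real.sin θ) + B := by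
  obtain ⟨hθ0, hθ2⟩ := hθ
  have hsθ : 0 < Real.sin θ :=
    Real.sin_pos_of_pos_of_lt_pi hθ0 (lt_of_le_of_lt hθ2 (by linarith [Real.pi_pos]))
  set ε : ℝ := min (1 / 2) (Real.sin θ * Real.exp (B - c') / 4) with hεdef
  have hε0 : 0 < ε := lt_min (by norm_num) (by positivity)
  have hε1 : ε < 1 := lt_of_le_of_lt (min_le_left _ _) (by norm_num)
  refine ⟨Real.arcsin ε, ⟨Real.arcsin_pos.mpr hε0, Real.arcsin_lt_pi_div_two.mpr hε1⟩, ?_⟩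
  have hsin : Real.sin (Real.arcsin ε) = ε := Real.sin_arcsin (by linarith) hε1.le
  rw [eventually_atTop]
  refine ⟨max 1 (Real.log (4 / (Real.sin θ * Real.exp B))), fun l hl => ?_⟩
  have hl1 : (1 : ℝ) ≤ l := le_trans (le_max_left _ _) hl
  have hl2 : (4 : ℝ) ≤ Real.exp l * Real.sin θ * Real.exp B := by
    have h4 : (0 : ℝ) < 4 / (Real.sin θ * Real.exp B) := by positivity
    have := Real.exp_le_exp.mpr (le_trans (le_max_right _ _) hl)
    rw [Real.exp_log h4] at this
    rw [div_le_iff₀ (by positivity)] at this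
    nlinarith [Real.exp_pos B, Real.exp_pos l]
  rw [hsin]
  -- Step 1: bound the LHS argument
  have hsinh_le : ∀ x : ℝ, Real.sinh x ≤ Real.exp x / 2 := by
    intro x
    rw [Real.sinh_eq]
    have := (Real.exp_pos (-x)).le
    linarith
  have hεle : ε ≤ Real.sin θ * Real.exp (B - c') / 4 := min_le_right _ _
  have hA : Real.sinh (l + c') * ε ≤ Real.exp l * Real.sin θ * Real.exp B / 8 := by
    have h1 : Real.sinh (l + c') * ε ≤ Real.exp (l + c') / 2 * ε := by
      apply mul_le_mul_of_nonneg_right (hsinh_le _) hε0.le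
    have h2 : Real.exp (l + c') / 2 * ε ≤
        Real.exp (l + c') / 2 * (Real.sin θ * Real.exp (B - c') / 4) := by
      apply mul_le_mul_of_nonneg_left hεle (by positivity)
    have h3 : Real.exp (l + c') / 2 * (Real.sin θ * Real.exp (B - c') / 4) =
        Real.exp l * Real.sin θ * Real.exp B / 8 := by
      rw [Real.exp_add, Real.exp_sub]
      field_simp
      ring
    linarith
  -- Step 2: bound sinh l from below
  have hB : Real.exp l * Real.sin θ / 4 ≤ Real.sinh l * Real.sin θ := by
    have h1 : Real.exp l / 4 ≤ Real.sinh l := by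
      rw [Real.sinh_eq]
      have he1 : Real.exp 1 ≤ Real.exp l := Real.exp_le_exp.mpr hl1
      have he2 : Real.exp (-l) ≤ Real.exp (-1) := Real.exp_le_exp.mpr (by linarith)
      have he3 : Real.exp (-1) * Real.exp 1 = 1 := by
        rw [← Real.exp_add]; norm_num
      nlinarith [Real.exp_pos 1, Real.exp_pos (-1), Real.exp_pos l,
        Real.add_one_le_exp (1 : ℝ)]
    nlinarith
  -- Now chain through logs
  have key1 : Real.arsinh (Real.sinh (l + c') * ε) ≤
      Real.log (Real.exp l * Real.sin θ * Real.exp B / 2) := by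
    calc Real.arsinh (Real.sinh (l + c') * ε)
        ≤ Real.arsinh (Real.exp l * Real.sin θ * Real.exp B / 8) :=
          Real.arsinh_le_arsinh.mpr hA
      _ ≤ Real.log (2 * (Real.exp l * Real.sin θ * Real.exp B / 8) + 1) :=
          my_arsinh_le_log (by positivity)
      _ ≤ Real.log (Real.exp l * Real.sin θ * Real.exp B / 2) := by
          apply Real.log_le_log (by positivity)
          linarith
  have key2 : Real.log (Real.exp l * Real.sin θ / 2) + B ≤
      Real.arsinh (Real.sinh l * Real.sin θ) + B := by
    have : Real.log (2 * (Real.exp l * Real.sin θ / 4)) ≤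
        Real.arsinh (Real.exp l * Real.sin θ / 4) := my_log_le_arsinh (by positivity)
    have h2 : Real.arsinh (Real.exp l * Real.sin θ / 4) ≤
        Real.arsinh (Real.sinh l * Real.sin θ) := Real.arsinh_le_arsinh.mpr hB
    have h3 : 2 * (Real.exp l * Real.sin θ / 4) = Real.exp l * Real.sin θ / 2 := by ring
    rw [h3] at this
    linarith
  have key3 : Real.log (Real.exp l * Real.sin θ * Real.exp B / 2) =
      Real.log (Real.exp l * Real.sin θ / 2) + B := by
    rw [show Real.exp l * Real.sin θ * Real.exp B / 2 =
        (Real.exp l * Real.sin θ / 2) * Real.exp B by ring,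
      Real.log_mul (by positivity) (Real.exp_pos B).ne', Real.log_exp]
  linarith
end

section
/- Define F : ℝ × ℝ → ℝ × ℝ by F(t, r) = (s(t,r), β(t,r)), where s(t,r) ≥ 0 is the unique nonnegative real with cosh(s(t,r)) = cosh r · cosh t, and β(t,r) = arcsin( sinh r / sinh(s(t,r)) ). Then for every t ≠ 0 and r > 0, F is differentiable at (t, r), and its total derivative DF(t,r) satisfies: for every vector v = (v₁, v₂) ∈ ℝ², sinh(s(t,r))² · ( second component of DF(t,r)(v) )² + ( first component of DF(t,r)(v) )² = cosh(r)² · v₁² + v₂². -/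
/-!
Differentiating the defining relations `cosh s = cosh r cosh t` and `sin β sinh s = sinh r`
implicitly gives `sinh s · ds = cosh r sinh t dt + sinh r cosh t dr` and
`sinh s · (sinh s dβ) = ±(sinh t dr - sinh r cosh r cosh t dt)`. The matrix
`[[sinh t, sinh r cosh t], [-sinh r cosh t, sinh t]]` is `sinh s` times a rotation, because
`sinh² t + sinh² r cosh² t = sinh² s`; so, in orthonormal frames, `DF` is a rotation composed
with `diag (cosh r, 1)`.
-/

/-- The hypotenuse `s(t, r)`: the unique nonnegative real with
`cosh (polarS t r) = cosh r * cosh t` (see `polarS_nonneg` and `cosh_polarS`). -/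
noncomputable def polarS (t r : ℝ) : ℝ :=
  Real.arsinh (Real.sqrt ((Real.cosh r * Real.cosh t) ^ 2 - 1))

theorem polarS_nonneg (t r : ℝ) : 0 ≤ polarS t r :=
  Real.arsinh_nonneg_iff.mpr (Real.sqrt_nonneg _)

theorem cosh_polarS (t r : ℝ) : Real.cosh (polarS t r) = Real.cosh r * Real.cosh t := by
  have h1 : (1 : ℝ) ≤ Real.cosh r * Real.cosh t := by
    nlinarith [Real.one_le_cosh r, Real.one_le_cosh t]
  have h2 : (0 : ℝ) ≤ (Real.cosh r * Real.cosh t) ^ 2 - 1 := by nlinarith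
  rw [polarS, Real.cosh_arsinh, Real.sq_sqrt h2]
  rw [show (1 : ℝ) + ((Real.cosh r * Real.cosh t) ^ 2 - 1)
      = (Real.cosh r * Real.cosh t) ^ 2 by ring]
  exact Real.sqrt_sq (by linarith)

/-- The angle `β(t, r) = arcsin (sinh r / sinh (s(t, r)))`. -/
noncomputable def polarBeta (t r : ℝ) : ℝ :=
  Real.arcsin (Real.sinh r / Real.sinh (polarS t r))

/-- The change of coordinates `F(t, r) = (s(t, r), β(t, r))` from Fermi coordinates
to polar coordinates of the hyperbolic plane. -/
noncomputable def fermiToPolar (p : ℝ × ℝ) : ℝ × ℝ :=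
  (polarS p.1 p.2, polarBeta p.1 p.2)

open Real

theorem sinh_sq_eq_of_cosh_eq_mul_cosh {s t r : ℝ} (h : cosh s = cosh r * cosh t) :
    sinh s ^ 2 = sinh r ^ 2 + cosh r ^ 2 * sinh t ^ 2 := by
  have hs := cosh_sq_sub_sinh_sq s
  rw [h] at hs
  linear_combination -hs + cosh r ^ 2 * cosh_sq_sub_sinh_sq t + cosh_sq_sub_sinh_sq r

theorem cos_mul_sinh_sq_eq {s β t r : ℝ} (hs : cosh s = cosh r * cosh t)
    (hβ : sin β * sinh s = sinh r) : (cos β * sinh s) ^ 2 = (cosh r * sinh t) ^ 2 := by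
  linear_combination sinh s ^ 2 * cos_sq_add_sin_sq β + sinh_sq_eq_of_cosh_eq_mul_cosh hs
    - (sin β * sinh s + sinh r) * hβ

theorem polar_metric_eq_fermi_metric {s β t r a b v₁ v₂ : ℝ} (ht : t ≠ 0)
    (hs : cosh s = cosh r * cosh t) (hβ : sin β * sinh s = sinh r)
    (ha : sinh s * a = cosh r * sinh t * v₁ + sinh r * cosh t * v₂)
    (hb : cos β * sinh s * b + sin β * cosh s * a = cosh r * v₂) :
    sinh s ^ 2 * b ^ 2 + a ^ 2 = cosh r ^ 2 * v₁ ^ 2 + v₂ ^ 2 := by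
  have hS2 := sinh_sq_eq_of_cosh_eq_mul_cosh hs
  have hcos := cos_mul_sinh_sq_eq hs hβ
  have hcrst : cosh r * sinh t ≠ 0 := mul_ne_zero (cosh_pos r).ne' (sinh_ne_zero.mpr ht)
  have hS : sinh s ≠ 0 := by
    intro h0
    rw [h0] at hcos
    exact hcrst (by simpa using hcos.symm)
  -- `hb` solved for `b` after substituting `ha`; the cancellation is
  -- `sinh² s - sinh² r cosh² t = sinh² t`.
  have hQ : cos β * sinh s * (sinh s * (sinh s * b))
      = cosh r * sinh t * (sinh t * v₂ - sinh r * cosh r * cosh t * v₁) := by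
    linear_combination sinh s ^ 2 * hb - sinh s * cosh s * a * hβ - sinh r * cosh s * ha
      - (cosh r * sinh r * sinh t * v₁ + sinh r ^ 2 * cosh t * v₂) * hs + cosh r * v₂ * hS2
      + cosh r * v₂ * (sinh t ^ 2 * cosh_sq_sub_sinh_sq r - sinh r ^ 2 * cosh_sq_sub_sinh_sq t)
  have hQ_sq :
      (sinh s * (sinh s * b)) ^ 2 = (sinh t * v₂ - sinh r * cosh r * cosh t * v₁) ^ 2 := by
    refine mul_left_cancel₀ (pow_ne_zero 2 hcrst) ?_
    linear_combination (cos β * sinh s * (sinh s * (sinh s * b))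
      + cosh r * sinh t * (sinh t * v₂ - sinh r * cosh r * cosh t * v₁)) * hQ
      - (sinh s * (sinh s * b)) ^ 2 * hcos
  have hPQ : (cosh r * sinh t * v₁ + sinh r * cosh t * v₂) ^ 2
      + (sinh t * v₂ - sinh r * cosh r * cosh t * v₁) ^ 2
      = sinh s ^ 2 * (cosh r ^ 2 * v₁ ^ 2 + v₂ ^ 2) := by
    linear_combination (cosh r ^ 2 * v₁ ^ 2 + v₂ ^ 2)
      * (-hS2 - sinh t ^ 2 * cosh_sq_sub_sinh_sq r + sinh r ^ 2 * cosh_sq_sub_sinh_sq t)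
  refine mul_left_cancel₀ (pow_ne_zero 2 hS) ?_
  linear_combination
    hQ_sq + (sinh s * a + cosh r * sinh t * v₁ + sinh r * cosh t * v₂) * ha + hPQ

theorem abs_sinh_lt_sinh_polarS {t : ℝ} (ht : t ≠ 0) (r : ℝ) :
    |sinh r| < sinh (polarS t r) := by
  have hpos : 0 < cosh r ^ 2 * sinh t ^ 2 := by
    have := sinh_ne_zero.mpr ht
    positivity
  refine abs_lt_of_sq_lt_sq ?_ (sinh_nonneg_iff.mpr (polarS_nonneg t r))
  rw [sinh_sq_eq_of_cosh_eq_mul_cosh (cosh_polarS t r)]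
  linarith

theorem sinh_polarS_pos {t : ℝ} (ht : t ≠ 0) (r : ℝ) : 0 < sinh (polarS t r) :=
  (abs_nonneg _).trans_lt (abs_sinh_lt_sinh_polarS ht r)

theorem sin_polarBeta_mul_sinh_polarS {t : ℝ} (ht : t ≠ 0) (r : ℝ) :
    sin (polarBeta t r) * sinh (polarS t r) = sinh r := by
  have hS := sinh_polarS_pos ht r
  obtain ⟨hlo, hhi⟩ := abs_lt.mp (abs_sinh_lt_sinh_polarS ht r)
  rw [polarBeta, sin_arcsin, div_mul_cancel₀ _ hS.ne']
  · rw [le_div_iff₀ hS]; linarith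
  · rw [div_le_iff₀ hS]; linarith

theorem differentiableAt_polarS {t : ℝ} (ht : t ≠ 0) (r : ℝ) :
    DifferentiableAt ℝ (fun p : ℝ × ℝ => polarS p.1 p.2) (t, r) := by
  have h : (cosh r * cosh t) ^ 2 - 1 ≠ 0 := by
    rw [← cosh_polarS, cosh_sq', add_sub_cancel_left]
    exact (pow_pos (sinh_polarS_pos ht r) 2).ne'
  unfold polarS
  fun_prop (disch := exact h)

theorem differentiableAt_polarBeta {t : ℝ} (ht : t ≠ 0) (r : ℝ) :
    DifferentiableAt ℝ (fun p : ℝ × ℝ => polarBeta p.1 p.2) (t, r) := by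
  have hS := sinh_polarS_pos ht r
  obtain ⟨hlo, hhi⟩ := abs_lt.mp (abs_sinh_lt_sinh_polarS ht r)
  have hs := differentiableAt_polarS ht r
  refine (differentiableAt_arcsin.mpr ⟨?_, ?_⟩).comp (t, r)
    (by fun_prop (disch := exact hS.ne'))
  · rw [ne_eq, div_eq_iff hS.ne']; linarith
  · rw [ne_eq, div_eq_iff hS.ne']; linarith

theorem differentiableAt_fermiToPolar {t : ℝ} (ht : t ≠ 0) (r : ℝ) :
    DifferentiableAt ℝ fermiToPolar (t, r) :=
  (differentiableAt_polarS ht r).prodMk (differentiableAt_polarBeta ht r)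

theorem hasFDerivAt_fermiToPolar_fst_eq {t r : ℝ} {F' : ℝ × ℝ →L[ℝ] ℝ × ℝ}
    (hF : HasFDerivAt fermiToPolar F' (t, r)) (v : ℝ × ℝ) :
    sinh (polarS t r) * (F' v).1 = cosh r * sinh t * v.1 + sinh r * cosh t * v.2 := by
  have hcosh : HasFDerivAt (fun p : ℝ × ℝ => cosh p.2 * cosh p.1) _ (t, r) :=
    hasFDerivAt_snd.cosh.mul hasFDerivAt_fst.cosh
  have hcosh_s := hF.fst.cosh
  rw [show (fun p => cosh (fermiToPolar p).1) = fun p : ℝ × ℝ => cosh p.2 * cosh p.1 from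
    funext fun p => cosh_polarS p.1 p.2] at hcosh_s
  have h := congrArg (· v) (hcosh_s.unique hcosh)
  simp only [fermiToPolar, add_apply, smul_apply,
    ContinuousLinearMap.comp_apply, ContinuousLinearMap.coe_fst', ContinuousLinearMap.coe_snd',
    smul_eq_mul] at h
  linear_combination h

theorem hasFDerivAt_fermiToPolar_snd_eq {t r : ℝ} (ht : t ≠ 0)
    {F' : ℝ × ℝ →L[ℝ] ℝ × ℝ} (hF : HasFDerivAt fermiToPolar F' (t, r))
    (v : ℝ × ℝ) :
    cos (polarBeta t r) * sinh (polarS t r) * (F' v).2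
      + sin (polarBeta t r) * cosh (polarS t r) * (F' v).1 = cosh r * v.2 := by
  -- `sin β · sinh s = sinh r` only holds where `t ≠ 0`, hence the local congruence.
  have hsinh : HasFDerivAt (fun p : ℝ × ℝ => sin (fermiToPolar p).2 * sinh (fermiToPolar p).1)
      (cosh r • ContinuousLinearMap.snd ℝ ℝ ℝ) (t, r) := by
    refine (hasFDerivAt_snd (p := (t, r))).sinh.congr_of_eventuallyEq ?_
    filter_upwards [continuousAt_fst.eventually_ne ht] with p hp
    exact sin_polarBeta_mul_sinh_polarS hp p.2
  have h := congrArg (· v) ((hF.snd.sin.mul hF.fst.sinh).unique hsinh)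
  simp only [fermiToPolar, add_apply, smul_apply,
    ContinuousLinearMap.comp_apply, ContinuousLinearMap.coe_fst', ContinuousLinearMap.coe_snd',
    smul_eq_mul] at h
  linear_combination h

theorem fermiToPolar_differentiableAt_and_isometry_general (t r : ℝ) (ht : t ≠ 0) :
    DifferentiableAt ℝ fermiToPolar (t, r) ∧
      ∀ v : ℝ × ℝ,
        Real.sinh ((fermiToPolar (t, r)).1) ^ 2 * (fderiv ℝ fermiToPolar (t, r) v).2 ^ 2
            + (fderiv ℝ fermiToPolar (t, r) v).1 ^ 2
          = Real.cosh r ^ 2 * v.1 ^ 2 + v.2 ^ 2 := by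
  have hF := (differentiableAt_fermiToPolar ht r).hasFDerivAt
  exact ⟨hF.differentiableAt, fun v => polar_metric_eq_fermi_metric ht (cosh_polarS t r)
    (sin_polarBeta_mul_sinh_polarS ht r) (hasFDerivAt_fermiToPolar_fst_eq hF v)
    (hasFDerivAt_fermiToPolar_snd_eq ht hF v)⟩

/-- For every `t ≠ 0` and `r > 0`, `F = fermiToPolar` is differentiable at `(t, r)`,
and its total derivative satisfies: for every `v = (v₁, v₂)`,
`sinh (s(t,r))² * (DF(t,r)(v))₂² + (DF(t,r)(v))₁² = cosh(r)² * v₁² + v₂²`;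
i.e. the pullback under `F` of `sinh² s dβ² + ds²` equals `cosh² r dt² + dr²`. -/
theorem fermiToPolar_differentiableAt_and_isometry (t r : ℝ) (ht : t ≠ 0) (hr : 0 < r) :
    DifferentiableAt ℝ fermiToPolar (t, r) ∧
      ∀ v : ℝ × ℝ,
        Real.sinh ((fermiToPolar (t, r)).1) ^ 2 * (fderiv ℝ fermiToPolar (t, r) v).2 ^ 2
            + (fderiv ℝ fermiToPolar (t, r) v).1 ^ 2
          = Real.cosh r ^ 2 * v.1 ^ 2 + v.2 ^ 2 :=
  fermiToPolar_differentiableAt_and_isometry_general t r ht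
end
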